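/- For a ∈ (0,1/2), the critical parameter λ_c(a) (unique λ > 2 with log(λ/(2√(λ-1))) = a log(λ-1)) is a strictly increasing function of a. -/

import Mathlib

noncomputable def freeEn (l : ℝ) : ℝ := Real.log (l / (2 * Real.sqrt (l - 1)))

noncomputable def Ffun (x : ℝ) : ℝ :=
  Real.log x - Real.log 2 - 1/2 * Real.log (x - 1)

noncomputable def Hfun (x : ℝ) : ℝ :=
  (1/2 - 1/x) * Real.log (x - 1) - Ffun x

noncomputable def Gfun (x : ℝ) : ℝ := Ffun x / Real.log (x - 1)

lemma freeEn_eq {x : ℝ} (hx : 2 < x) : freeEn x = Ffun x := by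
  have h1 : (0:ℝ) < x - 1 := by linarith
  have hs : Real.sqrt (x - 1) > 0 := Real.sqrt_pos.mpr h1
  unfold freeEn Ffun
  rw [Real.log_div (by positivity) (by positivity), Real.log_mul (by norm_num) (ne_of_gt hs),
    Real.log_sqrt (le_of_lt h1)]
  ring

lemma log_pos' {x : ℝ} (hx : 2 < x) : 0 < Real.log (x - 1) :=
  Real.log_pos (by linarith)

lemma hasDerivAt_logsub {x : ℝ} (hx : 2 < x) :
    HasDerivAt (fun y : ℝ => Real.log (y - 1)) (1 / (x - 1)) x := by
  have h := ((hasDerivAt_id x).sub_const 1).log (by simp; intro h; (try simp only [id] at h); linarith)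
  simpa using h

lemma hasDerivAt_F {x : ℝ} (hx : 2 < x) :
    HasDerivAt Ffun (1/x - 1/(2*(x-1))) x := by
  have h1 : HasDerivAt Real.log x⁻¹ x := Real.hasDerivAt_log (by linarith)
  have h2 := hasDerivAt_logsub hx
  have := (h1.sub_const (Real.log 2)).sub (h2.const_mul (1/2 : ℝ))
  convert this using 1
  · rfl
  · rfl
  · rfl
  have hx1 : x - 1 ≠ 0 := by intro h; linarith
  show 1 / x - 1 / (2 * (x - 1)) = x⁻¹ - 1 / 2 * (1 / (x - 1))
  field_simp

lemma hasDerivAt_H {x : ℝ} (hx : 2 < x) :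
    HasDerivAt Hfun (Real.log (x - 1) / x^2) x := by
  have hx0 : x ≠ 0 := by linarith
  have h1 : HasDerivAt (fun y : ℝ => 1/2 - 1/y) (1/x^2) x := by
    have := (hasDerivAt_inv hx0).const_sub (1/2 : ℝ)
    simpa [one_div, pow_two] using this
  have h2 := hasDerivAt_logsub hx
  have h3 := (h1.mul h2).sub (hasDerivAt_F hx)
  convert h3 using 1
  have hx1 : x - 1 ≠ 0 := by intro h; (try simp only [id] at h); linarith
  · rfl
  · rfl
  · rfl
  have hx1 : x - 1 ≠ 0 := by intro h; linarith
  show Real.log (x - 1) / x ^ 2 =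
    1 / x ^ 2 * Real.log (x - 1) + (1 / 2 - 1 / x) * (1 / (x - 1)) - (1 / x - 1 / (2 * (x - 1)))
  field_simp
  ring

lemma continuousOn_logsub : ContinuousOn (fun y : ℝ => Real.log (y - 1)) (Set.Ici 2) := by
  apply ContinuousOn.log
  · exact (continuousOn_id.sub continuousOn_const)
  · intro y hy
    simp only [Set.mem_Ici] at hy
    intro h; (try simp only [id] at h); linarith

lemma Hpos {x : ℝ} (hx : 2 < x) : 0 < Hfun x := by
  have hmono : StrictMonoOn Hfun (Set.Ici 2) := by
    apply strictMonoOn_of_deriv_pos (convex_Ici 2)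
    · unfold Hfun Ffun
      apply ContinuousOn.sub
      · exact ((continuousOn_const.sub (continuousOn_const.div continuousOn_id
          (fun y hy => by simp only [Set.mem_Ici] at hy; intro h; (try simp only [id] at h); linarith))).mul
          continuousOn_logsub)
      · apply ContinuousOn.sub
        · apply ContinuousOn.sub
          · exact ContinuousOn.log continuousOn_id (fun y hy => by
              simp only [Set.mem_Ici] at hy; intro h; (try simp only [id] at h); linarith)
          · exact continuousOn_const
        · exact continuousOn_const.mul continuousOn_logsub
    · intro y hy
      rw [interior_Ici] at hy
      simp only [Set.mem_Ioi] at hy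
      rw [(hasDerivAt_H hy).deriv]
      have := log_pos' hy
      positivity
  have h2 : Hfun 2 = 0 := by
    unfold Hfun Ffun
    norm_num
  have := hmono (Set.self_mem_Ici) (Set.mem_Ici.mpr (le_of_lt hx)) hx
  linarith [this, h2.symm ▸ this]

lemma Gmono : StrictMonoOn Gfun (Set.Ioi 2) := by
  apply strictMonoOn_of_deriv_pos (convex_Ioi 2)
  · apply ContinuousOn.div
    · unfold Ffun
      apply ContinuousOn.sub
      · apply ContinuousOn.sub
        · exact ContinuousOn.log continuousOn_id (fun y hy => by
            simp only [Set.mem_Ioi] at hy; intro h; (try simp only [id] at h); linarith)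
        · exact continuousOn_const
      · exact continuousOn_const.mul (continuousOn_logsub.mono (by
          intro y hy; simp only [Set.mem_Ioi] at hy; exact Set.mem_Ici.mpr (le_of_lt hy)))
    · exact continuousOn_logsub.mono (fun y hy => Set.mem_Ici.mpr (le_of_lt hy))
    · intro y hy
      simp only [Set.mem_Ioi] at hy
      exact ne_of_gt (log_pos' hy)
  · intro x hx
    rw [interior_Ioi] at hx
    simp only [Set.mem_Ioi] at hx
    have hL := log_pos' hx
    have hL0 : Real.log (x - 1) ≠ 0 := ne_of_gt hL
    have hd : HasDerivAt Gfun
        (((1/x - 1/(2*(x-1))) * Real.log (x-1) - Ffun x * (1/(x-1))) / (Real.log (x-1))^2) x :=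
      (hasDerivAt_F hx).div (hasDerivAt_logsub hx) hL0
    rw [hd.deriv]
    apply div_pos _ (by positivity)
    have hx1 : (0:ℝ) < x - 1 := by linarith
    have key : (1/x - 1/(2*(x-1))) * Real.log (x-1) - Ffun x * (1/(x-1))
        = Hfun x / (x - 1) := by
      unfold Hfun
      field_simp
      ring
    rw [key]
    exact div_pos (Hpos hx) hx1

/-- The critical parameter `λ_c(a)` (the unique `λ > 2` with
`log(λ/(2√(λ-1))) = a log(λ-1)`) is strictly increasing in `a ∈ (0,1/2)`. -/
theorem critical_point_strictMono (a₁ a₂ l₁ l₂ : ℝ)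
    (ha₁ : a₁ ∈ Set.Ioo (0 : ℝ) (1 / 2)) (ha₂ : a₂ ∈ Set.Ioo (0 : ℝ) (1 / 2))
    (ha : a₁ < a₂)
    (hl₁ : 2 < l₁) (heq₁ : freeEn l₁ = a₁ * Real.log (l₁ - 1))
    (hl₂ : 2 < l₂) (heq₂ : freeEn l₂ = a₂ * Real.log (l₂ - 1)) :
    l₁ < l₂ := by
  have hL₁ := log_pos' hl₁
  have hL₂ := log_pos' hl₂
  have hg₁ : Gfun l₁ = a₁ := by
    unfold Gfun
    rw [← freeEn_eq hl₁, heq₁]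
    field_simp
  have hg₂ : Gfun l₂ = a₂ := by
    unfold Gfun
    rw [← freeEn_eq hl₂, heq₂]
    field_simp
  have : Gfun l₁ < Gfun l₂ := by rw [hg₁, hg₂]; exact ha
  exact (Gmono.lt_iff_lt (Set.mem_Ioi.mpr hl₁) (Set.mem_Ioi.mpr hl₂)).mp this
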